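/- arXiv:2505.20447 — 4 statements merged into one kernel-verified Lean document; each statement's English description precedes it below -/
import Mathlib

section
/- Let H be a complex separable Hilbert space, let ϱ be a self-adjoint Hilbert–Schmidt operator on H, and let ζ be a positive self-adjoint Hilbert–Schmidt operator such that −ζ ≤ ϱ ≤ ζ (as operator inequalities). Then ‖ϱ‖₂ ≤ ‖ζ‖₂, where ‖·‖₂ denotes the Hilbert–Schmidt norm. -/
open scoped ENNReal

section Aux

open scoped InnerProductSpace ComplexConjugate
open Filter

set_option maxHeartbeats 1000000 in
set_option synthInstance.maxHeartbeats 400000 in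
/-- Key positivity: for positive HS operators `A`, `B`, the "trace" of `A*B` is nonneg. -/
private lemma aux_pos {H : Type*} [NormedAddCommGroup H] [InnerProductSpace ℂ H]
    [CompleteSpace H] {ι : Type*} (e : HilbertBasis ι ℂ H)
    (A B : H →L[ℂ] H) (hA : 0 ≤ A) (hB : 0 ≤ B)
    (hgs : Summable (fun p : ι × ι => ⟪A (e p.1), e p.2⟫_ℂ * ⟪e p.2, B (e p.1)⟫_ℂ)) :
    0 ≤ RCLike.re (∑' p : ι × ι, ⟪A (e p.1), e p.2⟫_ℂ * ⟪e p.2, B (e p.1)⟫_ℂ) := by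
  classical
  set g : ι × ι → ℂ := fun p => ⟪A (e p.1), e p.2⟫_ℂ * ⟪e p.2, B (e p.1)⟫_ℂ with hgdef
  set S := CFC.sqrt A with hSdef
  set T := CFC.sqrt B with hTdef
  have hSS : S * S = A := CFC.sqrt_mul_sqrt_self A hA
  have hTT : T * T = B := CFC.sqrt_mul_sqrt_self B hB
  have hSsym : ∀ x y : H, ⟪S x, y⟫_ℂ = ⟪x, S y⟫_ℂ := fun x y =>
    (ContinuousLinearMap.isSelfAdjoint_iff_isSymmetric.mp (IsSelfAdjoint.of_nonneg (CFC.sqrt_nonneg A))) x y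
  have hTsym : ∀ x y : H, ⟪T x, y⟫_ℂ = ⟪x, T y⟫_ℂ := fun x y =>
    (ContinuousLinearMap.isSelfAdjoint_iff_isSymmetric.mp (IsSelfAdjoint.of_nonneg (CFC.sqrt_nonneg B))) x y
  have hAin : ∀ i j : ι, ⟪A (e i), e j⟫_ℂ = ⟪S (e i), S (e j)⟫_ℂ := by
    intro i j
    rw [← hSS, ContinuousLinearMap.mul_apply, hSsym]
  have hBin : ∀ i j : ι, ⟪e j, B (e i)⟫_ℂ = ⟪T (e j), T (e i)⟫_ℂ := by
    intro i j
    rw [← hTT, ContinuousLinearMap.mul_apply, hTsym]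
  -- nonnegativity of "square" partial sums
  have hkey : ∀ F : Finset ι, 0 ≤ RCLike.re (∑ p ∈ F ×ˢ F, g p) := by
    intro F
    set y : ι → H := fun k => ∑ i ∈ F, ⟪T (e i), e k⟫_ℂ • S (e i) with hy
    have hks : HasSum
        (fun k => ∑ p ∈ F ×ˢ F,
          ⟪S (e p.1), S (e p.2)⟫_ℂ * (⟪T (e p.2), e k⟫_ℂ * ⟪e k, T (e p.1)⟫_ℂ))
        (∑ p ∈ F ×ˢ F, ⟪S (e p.1), S (e p.2)⟫_ℂ * ⟪T (e p.2), T (e p.1)⟫_ℂ) :=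
      hasSum_sum fun p _ => ((e.hasSum_inner_mul_inner (T (e p.2)) (T (e p.1))).mul_left _)
    have hval : ∑ p ∈ F ×ˢ F, ⟪S (e p.1), S (e p.2)⟫_ℂ * ⟪T (e p.2), T (e p.1)⟫_ℂ
        = ∑ p ∈ F ×ˢ F, g p := by
      refine Finset.sum_congr rfl fun p _ => ?_
      rw [hgdef]
      dsimp only
      rw [hAin p.1 p.2, hBin p.1 p.2]
    have hterm : ∀ k : ι, ∑ p ∈ F ×ˢ F,
        ⟪S (e p.1), S (e p.2)⟫_ℂ * (⟪T (e p.2), e k⟫_ℂ * ⟪e k, T (e p.1)⟫_ℂ)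
        = ⟪y k, y k⟫_ℂ := by
      intro k
      rw [hy]
      rw [sum_inner]
      simp_rw [inner_sum, inner_smul_left, inner_smul_right]
      rw [Finset.sum_product]
      refine Finset.sum_congr rfl fun i _ => Finset.sum_congr rfl fun j _ => ?_
      rw [show ⟪e k, T (e i)⟫_ℂ = conj ⟪T (e i), e k⟫_ℂ from (inner_conj_symm _ _).symm]
      ring
    rw [hval] at hks
    have h6 := hks.mapL RCLike.reCLM
    refine hasSum_le (fun k => ?_) hasSum_zero h6
    have := hterm k
    simp only [RCLike.reCLM_apply]
    rw [this]
    exact inner_self_nonneg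
  -- pass to the limit along "squares"
  have hsq' : Tendsto (fun F : Finset ι => F ×ˢ F) atTop atTop := by
    apply Filter.tendsto_atTop_atTop.mpr
    intro G
    refine ⟨G.image Prod.fst ∪ G.image Prod.snd, fun F hF => ?_⟩
    intro p hp
    rw [Finset.mem_product]
    exact ⟨hF (Finset.mem_union_left _ (Finset.mem_image_of_mem _ hp)),
      hF (Finset.mem_union_right _ (Finset.mem_image_of_mem _ hp))⟩
  have h2 : Tendsto (fun F : Finset ι => ∑ p ∈ F ×ˢ F, g p) atTop (nhds (∑' p, g p)) :=
    (hgs.hasSum).comp hsq'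
  have ht : Tendsto (fun F : Finset ι => RCLike.re (∑ p ∈ F ×ˢ F, g p)) atTop
      (nhds (RCLike.re (∑' p, g p))) :=
    ((RCLike.continuous_re).tendsto _).comp h2
  exact ge_of_tendsto' ht hkey

end Aux

set_option maxHeartbeats 1000000 in
set_option synthInstance.maxHeartbeats 400000 in
open scoped InnerProductSpace in
/-- If `ϱ` is a self-adjoint Hilbert–Schmidt operator and `ζ` a positive self-adjoint
Hilbert–Schmidt operator on a complex separable Hilbert space with `-ζ ≤ ϱ ≤ ζ`
(Loewner order), then `‖ϱ‖₂ ≤ ‖ζ‖₂`.  The (squared) Hilbert–Schmidt norm is expressed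
as `Σᵢ ‖T(eᵢ)‖²` (valued in `ℝ≥0∞`) for a Hilbert basis `e`. -/
theorem stmt_1 {H : Type*} [NormedAddCommGroup H] [InnerProductSpace ℂ H]
    [CompleteSpace H] [TopologicalSpace.SeparableSpace H]
    {ι : Type*} (e : HilbertBasis ι ℂ H)
    (ϱ ζ : H →L[ℂ] H) (hϱ : IsSelfAdjoint ϱ) (hζ : 0 ≤ ζ)
    (hϱHS : ∑' i, (‖ϱ (e i)‖₊ : ℝ≥0∞) ^ 2 ≠ ∞)
    (hζHS : ∑' i, (‖ζ (e i)‖₊ : ℝ≥0∞) ^ 2 ≠ ∞)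
    (h₁ : -ζ ≤ ϱ) (h₂ : ϱ ≤ ζ) :
    ∑' i, (‖ϱ (e i)‖₊ : ℝ≥0∞) ^ 2 ≤ ∑' i, (‖ζ (e i)‖₊ : ℝ≥0∞) ^ 2 := by
  classical
  -- real summability of the Hilbert–Schmidt data
  have hsq : ∀ R : H →L[ℂ] H, (∑' i, (‖R (e i)‖₊ : ℝ≥0∞) ^ 2 ≠ ∞) →
      Summable (fun i => ‖R (e i)‖ ^ 2) := by
    intro R hR
    simp_rw [← ENNReal.coe_pow] at hR
    have h2 := ENNReal.tsum_coe_ne_top_iff_summable.mp hR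
    have h3 := NNReal.summable_coe.mpr h2
    simpa [NNReal.coe_pow] using h3
  have hϱs := hsq ϱ hϱHS
  have hζs := hsq ζ hζHS
  -- the operators A = ζ - ϱ ≥ 0 and B = ζ + ϱ ≥ 0
  set A := ζ - ϱ with hAdef
  set B := ζ + ϱ with hBdef
  have hA : (0 : H →L[ℂ] H) ≤ A := sub_nonneg.mpr h₂
  have hB : (0 : H →L[ℂ] H) ≤ B := by
    have h := add_le_add_left h₁ ζ
    simpa [hBdef, add_comm] using h
  have hAapp : ∀ i : ι, A (e i) = ζ (e i) - ϱ (e i) := fun i => rfl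
  have hBapp : ∀ i : ι, B (e i) = ζ (e i) + ϱ (e i) := fun i => rfl
  -- ℓ² expansions of vectors
  have hnorm : ∀ x : H, HasSum (fun j => ‖⟪x, e j⟫_ℂ‖ ^ 2) (‖x‖ ^ 2) := by
    intro x
    have h := (e.hasSum_inner_mul_inner x x).mapL RCLike.reCLM
    have e2 : RCLike.reCLM ⟪x, x⟫_ℂ = ‖x‖ ^ 2 := by
      rw [RCLike.reCLM_apply]; exact inner_self_eq_norm_sq x
    have e1 : (fun j => RCLike.reCLM (⟪x, e j⟫_ℂ * ⟪e j, x⟫_ℂ))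
        = fun j => ‖⟪x, e j⟫_ℂ‖ ^ 2 := by
      funext j
      rw [RCLike.reCLM_apply, ← inner_conj_symm x (e j), RCLike.conj_mul]
      simp [← Complex.ofReal_pow, norm_inner_symm x]
    rw [e1, e2] at h
    exact h
  have hAs : Summable (fun i => ‖A (e i)‖ ^ 2) := by
    refine Summable.of_nonneg_of_le (fun i => sq_nonneg _) (fun i => ?_)
      ((hζs.add hϱs).mul_left 2)
    have h1 : ‖A (e i)‖ ≤ ‖ζ (e i)‖ + ‖ϱ (e i)‖ := by
      rw [hAapp]; exact norm_sub_le _ _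
    have h2 : ‖A (e i)‖ ^ 2 ≤ (‖ζ (e i)‖ + ‖ϱ (e i)‖) ^ 2 :=
      pow_le_pow_left₀ (norm_nonneg _) h1 2
    nlinarith [sq_nonneg (‖ζ (e i)‖ - ‖ϱ (e i)‖)]
  have hBs : Summable (fun i => ‖B (e i)‖ ^ 2) := by
    refine Summable.of_nonneg_of_le (fun i => sq_nonneg _) (fun i => ?_)
      ((hζs.add hϱs).mul_left 2)
    have h1 : ‖B (e i)‖ ≤ ‖ζ (e i)‖ + ‖ϱ (e i)‖ := by
      rw [hBapp]; exact norm_add_le _ _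
    have h2 : ‖B (e i)‖ ^ 2 ≤ (‖ζ (e i)‖ + ‖ϱ (e i)‖) ^ 2 :=
      pow_le_pow_left₀ (norm_nonneg _) h1 2
    nlinarith [sq_nonneg (‖ζ (e i)‖ - ‖ϱ (e i)‖)]
  -- the double family is summable
  have hg2 : ∀ R : H →L[ℂ] H, Summable (fun i => ‖R (e i)‖ ^ 2) →
      Summable (fun p : ι × ι => ‖⟪R (e p.1), e p.2⟫_ℂ‖ ^ 2) := by
    intro R hR
    apply (summable_prod_of_nonneg (fun p => sq_nonneg _)).mpr
    refine ⟨fun i => (hnorm (R (e i))).summable, ?_⟩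
    have h : (fun i => ∑' j, ‖⟪R (e i), e j⟫_ℂ‖ ^ 2) = fun i => ‖R (e i)‖ ^ 2 :=
      funext fun i => (hnorm (R (e i))).tsum_eq
    rw [h]
    exact hR
  set g : ι × ι → ℂ := fun p => ⟪A (e p.1), e p.2⟫_ℂ * ⟪e p.2, B (e p.1)⟫_ℂ with hgdef
  have hgs : Summable g := by
    apply Summable.of_norm
    refine Summable.of_nonneg_of_le (fun p => norm_nonneg _) (fun p => ?_)
      ((hg2 A hAs).add (hg2 B hBs))
    rw [hgdef]
    dsimp only
    rw [norm_mul, norm_inner_symm (e p.2) (B (e p.1))]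
    nlinarith [norm_nonneg ⟪A (e p.1), e p.2⟫_ℂ, norm_nonneg ⟪B (e p.1), e p.2⟫_ℂ]
  -- relate the total sum to the HS norms
  have hfib : ∀ i, HasSum (fun j => g (i, j)) ⟪A (e i), B (e i)⟫_ℂ := fun i =>
    e.hasSum_inner_mul_inner (A (e i)) (B (e i))
  have htot : HasSum (fun i => ⟪A (e i), B (e i)⟫_ℂ) (∑' p, g p) :=
    (hgs.hasSum).prod_fiberwise hfib
  have hre : HasSum (fun i => ‖ζ (e i)‖ ^ 2 - ‖ϱ (e i)‖ ^ 2)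
      (RCLike.re (∑' p, g p)) := by
    have h := htot.mapL RCLike.reCLM
    have eterm : (fun i => RCLike.reCLM ⟪A (e i), B (e i)⟫_ℂ)
        = fun i => ‖ζ (e i)‖ ^ 2 - ‖ϱ (e i)‖ ^ 2 := by
      funext i
      rw [RCLike.reCLM_apply, hAapp, hBapp, inner_sub_left, inner_add_right,
        inner_add_right, map_sub, map_add, map_add]
      rw [inner_self_eq_norm_sq, inner_self_eq_norm_sq]
      rw [inner_re_symm (ζ (e i)) (ϱ (e i))]
      ring
    rw [eterm] at h
    exact h
  have hSig : RCLike.re (∑' p, g p)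
      = (∑' i, ‖ζ (e i)‖ ^ 2) - ∑' i, ‖ϱ (e i)‖ ^ 2 :=
    hre.unique (hζs.hasSum.sub hϱs.hasSum)
  have hpos : 0 ≤ RCLike.re (∑' p, g p) := aux_pos e A B hA hB hgs
  have hmain : (∑' i, ‖ϱ (e i)‖ ^ 2) ≤ ∑' i, ‖ζ (e i)‖ ^ 2 := by
    rw [hSig] at hpos
    linarith
  -- back to `ℝ≥0∞`
  have hconv : ∀ R : H →L[ℂ] H, Summable (fun i => ‖R (e i)‖ ^ 2) →
      ∑' i, (‖R (e i)‖₊ : ℝ≥0∞) ^ 2 = ENNReal.ofReal (∑' i, ‖R (e i)‖ ^ 2) := by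
    intro R hR
    rw [ENNReal.ofReal_tsum_of_nonneg (fun i => sq_nonneg _) hR]
    congr 1
    funext i
    rw [ENNReal.ofReal_pow (norm_nonneg _), ofReal_norm, enorm_eq_nnnorm]
  rw [hconv ϱ hϱs, hconv ζ hζs]
  exact ENNReal.ofReal_le_ofReal hmain
end

section
/- Let ϱ be a self-adjoint bounded operator and ζ a positive self-adjoint Hilbert–Schmidt operator on a complex separable Hilbert space with −ζ ≤ ϱ ≤ ζ. Then ϱ is a Hilbert–Schmidt operator. -/
set_option synthInstance.maxHeartbeats 1000000
set_option maxHeartbeats 1000000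

open scoped ENNReal ComplexConjugate
open RCLike

section Aux

variable {H : Type*} [NormedAddCommGroup H] [InnerProductSpace ℂ H] [CompleteSpace H]
  {ι : Type*}

local notation "⟪" x ", " y "⟫" => @inner ℂ _ _ x y

private lemma aux_sq_ofReal {G : Type*} [NormedAddCommGroup G] (x : G) :
    (‖x‖₊ : ℝ≥0∞) ^ 2 = ENNReal.ofReal (‖x‖ ^ 2) := by
  rw [ENNReal.ofReal_pow (norm_nonneg _), ← coe_nnnorm, ENNReal.ofReal_coe_nnreal]

private lemma aux_parseval (e : HilbertBasis ι ℂ H) (y : H) :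
    ∑' j, (‖⟪e j, y⟫‖₊ : ℝ≥0∞) ^ 2 = (‖y‖₊ : ℝ≥0∞) ^ 2 := by
  have h1 : HasSum (fun j => ⟪y, e j⟫ * ⟪e j, y⟫) ⟪y, y⟫ := e.hasSum_inner_mul_inner y y
  have heq : (fun j => ⟪y, e j⟫ * ⟪e j, y⟫) = fun j => ((‖⟪e j, y⟫‖ ^ 2 : ℝ) : ℂ) := by
    funext j
    rw [← inner_conj_symm y (e j), RCLike.conj_mul]; norm_cast
  rw [heq, inner_self_eq_norm_sq_to_K] at h1
  norm_cast at h1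
  have h3 : HasSum (fun j => (‖⟪e j, y⟫‖ ^ 2 : ℝ)) (‖y‖ ^ 2) :=
    Complex.hasSum_ofReal.mp h1
  have h4 := ENNReal.ofReal_tsum_of_nonneg (fun j => sq_nonneg _) h3.summable
  rw [h3.tsum_eq] at h4
  calc ∑' j, (‖⟪e j, y⟫‖₊ : ℝ≥0∞) ^ 2
      = ∑' j, ENNReal.ofReal (‖⟪e j, y⟫‖ ^ 2) := tsum_congr fun j => aux_sq_ofReal _
    _ = ENNReal.ofReal (‖y‖ ^ 2) := h4.symm
    _ = (‖y‖₊ : ℝ≥0∞) ^ 2 := (aux_sq_ofReal _).symm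

private lemma aux_flip (e : HilbertBasis ι ℂ H) (T : H →L[ℂ] H) :
    ∑' i, (‖T (e i)‖₊ : ℝ≥0∞) ^ 2
      = ∑' i, (‖(ContinuousLinearMap.adjoint T) (e i)‖₊ : ℝ≥0∞) ^ 2 := by
  calc ∑' i, (‖T (e i)‖₊ : ℝ≥0∞) ^ 2
      = ∑' i, ∑' j, (‖⟪e j, T (e i)⟫‖₊ : ℝ≥0∞) ^ 2 :=
        tsum_congr fun i => (aux_parseval e _).symm
    _ = ∑' j, ∑' i, (‖⟪e i, (ContinuousLinearMap.adjoint T) (e j)⟫‖₊ : ℝ≥0∞) ^ 2 := by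
        rw [ENNReal.tsum_comm]
        refine tsum_congr fun j => tsum_congr fun i => ?_
        congr 2
        rw [← ContinuousLinearMap.adjoint_inner_left,
          ← inner_conj_symm ((ContinuousLinearMap.adjoint T) (e j)) (e i), RCLike.nnnorm_conj]
    _ = ∑' j, (‖(ContinuousLinearMap.adjoint T) (e j)‖₊ : ℝ≥0∞) ^ 2 :=
        tsum_congr fun j => aux_parseval e _

private lemma aux_mono (X Y : H →L[ℂ] H) (h : X ≤ Y) (x : H) :
    re ⟪x, X x⟫ ≤ re ⟪x, Y x⟫ := by
  have hp := (ContinuousLinearMap.le_def X Y).mp h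
  have h1 := (RCLike.nonneg_iff.mp (hp.inner_nonneg_right (x := x))).1
  have h2 : re ⟪x, (Y - X) x⟫ = re ⟪x, Y x⟫ - re ⟪x, X x⟫ := by
    rw [ContinuousLinearMap.sub_apply, inner_sub_right, map_sub]
  linarith

private lemma aux_pos_pointwise1 (X Y : H →L[ℂ] H) (hX : 0 ≤ X) (hXY : X ≤ Y) (v : H) :
    ‖X v‖ ^ 2 ≤ ‖(CFC.sqrt Y * CFC.sqrt X) v‖ ^ 2 := by
  have hY : 0 ≤ Y := le_trans hX hXY
  set S := CFC.sqrt X with hSdef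
  set T := CFC.sqrt Y with hTdef
  have hS : IsSelfAdjoint S := IsSelfAdjoint.of_nonneg (CFC.sqrt_nonneg _)
  have hT : IsSelfAdjoint T := IsSelfAdjoint.of_nonneg (CFC.sqrt_nonneg _)
  have hSS : S * S = X := CFC.sqrt_mul_sqrt_self X hX
  have hTT : T * T = Y := CFC.sqrt_mul_sqrt_self Y hY
  have hSsym : ∀ a b : H, ⟪S a, b⟫ = ⟪a, S b⟫ := fun a b =>
    ContinuousLinearMap.isSelfAdjoint_iff_isSymmetric.mp hS a b
  have hTsym : ∀ a b : H, ⟪T a, b⟫ = ⟪a, T b⟫ := fun a b =>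
    ContinuousLinearMap.isSelfAdjoint_iff_isSymmetric.mp hT a b
  have hSapp : ∀ w : H, S (S w) = X w := fun w => by
    rw [← ContinuousLinearMap.mul_apply, hSS]
  have hTapp : ∀ w : H, T (T w) = Y w := fun w => by
    rw [← ContinuousLinearMap.mul_apply, hTT]
  have e1 : re ⟪X v, X v⟫ = re ⟪S v, X (S v)⟫ := by
    conv_lhs => rw [← hSapp v]
    rw [hSsym (S v) (S (S v)), hSapp (S v)]
  have e2 : re ⟪T (S v), T (S v)⟫ = re ⟪S v, Y (S v)⟫ := by
    rw [hTsym (S v) (T (S v)), hTapp (S v)]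
  calc ‖X v‖ ^ 2 = re ⟪X v, X v⟫ := (inner_self_eq_norm_sq _).symm
    _ = re ⟪S v, X (S v)⟫ := e1
    _ ≤ re ⟪S v, Y (S v)⟫ := aux_mono X Y hXY (S v)
    _ = re ⟪T (S v), T (S v)⟫ := e2.symm
    _ = ‖T (S v)‖ ^ 2 := inner_self_eq_norm_sq _
    _ = ‖(T * S) v‖ ^ 2 := by rw [ContinuousLinearMap.mul_apply]

private lemma aux_pos_pointwise2 (X Y : H →L[ℂ] H) (hX : 0 ≤ X) (hXY : X ≤ Y) (v : H) :
    ‖(CFC.sqrt X * CFC.sqrt Y) v‖ ^ 2 ≤ ‖Y v‖ ^ 2 := by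
  have hY : 0 ≤ Y := le_trans hX hXY
  set S := CFC.sqrt X with hSdef
  set T := CFC.sqrt Y with hTdef
  have hS : IsSelfAdjoint S := IsSelfAdjoint.of_nonneg (CFC.sqrt_nonneg _)
  have hT : IsSelfAdjoint T := IsSelfAdjoint.of_nonneg (CFC.sqrt_nonneg _)
  have hSS : S * S = X := CFC.sqrt_mul_sqrt_self X hX
  have hTT : T * T = Y := CFC.sqrt_mul_sqrt_self Y hY
  have hSsym : ∀ a b : H, ⟪S a, b⟫ = ⟪a, S b⟫ := fun a b =>
    ContinuousLinearMap.isSelfAdjoint_iff_isSymmetric.mp hS a b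
  have hTsym : ∀ a b : H, ⟪T a, b⟫ = ⟪a, T b⟫ := fun a b =>
    ContinuousLinearMap.isSelfAdjoint_iff_isSymmetric.mp hT a b
  have hSapp : ∀ w : H, S (S w) = X w := fun w => by
    rw [← ContinuousLinearMap.mul_apply, hSS]
  have hTapp : ∀ w : H, T (T w) = Y w := fun w => by
    rw [← ContinuousLinearMap.mul_apply, hTT]
  have e1 : re ⟪S (T v), S (T v)⟫ = re ⟪T v, X (T v)⟫ := by
    rw [hSsym (T v) (S (T v)), hSapp (T v)]
  have e2 : re ⟪T v, Y (T v)⟫ = re ⟪Y v, Y v⟫ := by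
    rw [← hTapp (T v), ← hTsym (T v) (T (T v)), hTapp v]
  calc ‖(S * T) v‖ ^ 2 = ‖S (T v)‖ ^ 2 := by rw [ContinuousLinearMap.mul_apply]
    _ = re ⟪S (T v), S (T v)⟫ := (inner_self_eq_norm_sq _).symm
    _ = re ⟪T v, X (T v)⟫ := e1
    _ ≤ re ⟪T v, Y (T v)⟫ := aux_mono X Y hXY (T v)
    _ = re ⟪Y v, Y v⟫ := e2
    _ = ‖Y v‖ ^ 2 := inner_self_eq_norm_sq _

private lemma aux_pos_s2 (e : HilbertBasis ι ℂ H) (X Y : H →L[ℂ] H) (hX : 0 ≤ X) (hXY : X ≤ Y) :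
    ∑' i, (‖X (e i)‖₊ : ℝ≥0∞) ^ 2 ≤ ∑' i, (‖Y (e i)‖₊ : ℝ≥0∞) ^ 2 := by
  have hS : IsSelfAdjoint (CFC.sqrt X) := IsSelfAdjoint.of_nonneg (CFC.sqrt_nonneg _)
  have hT : IsSelfAdjoint (CFC.sqrt Y) := IsSelfAdjoint.of_nonneg (CFC.sqrt_nonneg _)
  calc ∑' i, (‖X (e i)‖₊ : ℝ≥0∞) ^ 2
      ≤ ∑' i, (‖(CFC.sqrt Y * CFC.sqrt X) (e i)‖₊ : ℝ≥0∞) ^ 2 := by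
        refine ENNReal.tsum_le_tsum fun i => ?_
        rw [aux_sq_ofReal, aux_sq_ofReal]
        exact ENNReal.ofReal_le_ofReal (aux_pos_pointwise1 X Y hX hXY _)
    _ = ∑' i, (‖(ContinuousLinearMap.adjoint (CFC.sqrt Y * CFC.sqrt X)) (e i)‖₊ : ℝ≥0∞) ^ 2 :=
        aux_flip e _
    _ = ∑' i, (‖(CFC.sqrt X * CFC.sqrt Y) (e i)‖₊ : ℝ≥0∞) ^ 2 := by
        rw [← ContinuousLinearMap.star_eq_adjoint, star_mul, hS.star_eq, hT.star_eq]
    _ ≤ ∑' i, (‖Y (e i)‖₊ : ℝ≥0∞) ^ 2 := by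
        refine ENNReal.tsum_le_tsum fun i => ?_
        rw [aux_sq_ofReal, aux_sq_ofReal]
        exact ENNReal.ofReal_le_ofReal (aux_pos_pointwise2 X Y hX hXY _)

end Aux

/-- If `ϱ` is a self-adjoint bounded operator and `ζ` a positive self-adjoint
Hilbert–Schmidt operator on a complex separable Hilbert space with `-ζ ≤ ϱ ≤ ζ`
(Loewner order), then `ϱ` is Hilbert–Schmidt.  The Hilbert–Schmidt property is expressed
as finiteness of `Σᵢ ‖T(eᵢ)‖²` (valued in `ℝ≥0∞`) for a Hilbert basis `e`. -/
theorem stmt_2 {H : Type*} [NormedAddCommGroup H] [InnerProductSpace ℂ H]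
    [CompleteSpace H] [TopologicalSpace.SeparableSpace H]
    {ι : Type*} (e : HilbertBasis ι ℂ H)
    (ϱ ζ : H →L[ℂ] H) (hϱ : IsSelfAdjoint ϱ) (hζ : 0 ≤ ζ)
    (hζHS : ∑' i, (‖ζ (e i)‖₊ : ℝ≥0∞) ^ 2 ≠ ∞)
    (h₁ : -ζ ≤ ϱ) (h₂ : ϱ ≤ ζ) :
    ∑' i, (‖ϱ (e i)‖₊ : ℝ≥0∞) ^ 2 ≠ ∞ := by
  set A := ζ + ϱ with hAdef
  have hA0 : (0 : H →L[ℂ] H) ≤ A := by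
    rw [ContinuousLinearMap.le_def] at h₁ ⊢
    have hrw : A - 0 = ϱ - -ζ := by rw [hAdef]; abel
    rw [hrw]; exact h₁
  have hA2 : A ≤ ζ + ζ := by
    rw [ContinuousLinearMap.le_def] at h₂ ⊢
    have hrw : ζ + ζ - A = ζ - ϱ := by rw [hAdef]; abel
    rw [hrw]; exact h₂
  have hEA : ∑' i, (‖A (e i)‖₊ : ℝ≥0∞) ^ 2 ≤ ∑' i, (‖(ζ + ζ) (e i)‖₊ : ℝ≥0∞) ^ 2 :=
    aux_pos_s2 e A _ hA0 hA2
  have hEzz : ∑' i, (‖(ζ + ζ) (e i)‖₊ : ℝ≥0∞) ^ 2 ≤ 4 * ∑' i, (‖ζ (e i)‖₊ : ℝ≥0∞) ^ 2 := by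
    rw [← ENNReal.tsum_mul_left]
    refine ENNReal.tsum_le_tsum fun i => ?_
    have h1 : (‖(ζ + ζ) (e i)‖₊ : ℝ≥0∞) ≤ (‖ζ (e i)‖₊ : ℝ≥0∞) + ‖ζ (e i)‖₊ := by
      rw [ContinuousLinearMap.add_apply]
      exact_mod_cast nnnorm_add_le _ _
    calc (‖(ζ + ζ) (e i)‖₊ : ℝ≥0∞) ^ 2 ≤ ((‖ζ (e i)‖₊ : ℝ≥0∞) + ‖ζ (e i)‖₊) ^ 2 := by gcongr
      _ = 4 * (‖ζ (e i)‖₊ : ℝ≥0∞) ^ 2 := by ring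
  have hkey : ∀ a b : ℝ≥0∞, (a + b) ^ 2 ≤ 4 * (a ^ 2 + b ^ 2) := by
    intro a b
    rcases le_total a b with h | h
    · calc (a + b) ^ 2 ≤ (b + b) ^ 2 := by gcongr
        _ = 4 * b ^ 2 := by ring
        _ ≤ 4 * (a ^ 2 + b ^ 2) := by gcongr; exact le_add_self
    · calc (a + b) ^ 2 ≤ (a + a) ^ 2 := by gcongr
        _ = 4 * a ^ 2 := by ring
        _ ≤ 4 * (a ^ 2 + b ^ 2) := by gcongr; exact le_self_add
  have hfin : ∑' i, (‖ϱ (e i)‖₊ : ℝ≥0∞) ^ 2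
      ≤ 4 * (∑' i, (‖A (e i)‖₊ : ℝ≥0∞) ^ 2 + ∑' i, (‖ζ (e i)‖₊ : ℝ≥0∞) ^ 2) := by
    rw [← ENNReal.tsum_add, ← ENNReal.tsum_mul_left]
    refine ENNReal.tsum_le_tsum fun i => ?_
    have h1 : (‖ϱ (e i)‖₊ : ℝ≥0∞) ≤ (‖A (e i)‖₊ : ℝ≥0∞) + ‖ζ (e i)‖₊ := by
      have hrw : ϱ (e i) = A (e i) - ζ (e i) := by
        rw [hAdef, ContinuousLinearMap.add_apply]; abel
      rw [hrw]
      exact_mod_cast nnnorm_sub_le _ _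
    calc (‖ϱ (e i)‖₊ : ℝ≥0∞) ^ 2 ≤ ((‖A (e i)‖₊ : ℝ≥0∞) + ‖ζ (e i)‖₊) ^ 2 := by gcongr
      _ ≤ 4 * ((‖A (e i)‖₊ : ℝ≥0∞) ^ 2 + (‖ζ (e i)‖₊ : ℝ≥0∞) ^ 2) := hkey _ _
  have hA_ne : ∑' i, (‖A (e i)‖₊ : ℝ≥0∞) ^ 2 ≠ ∞ :=
    ne_top_of_le_ne_top (ENNReal.mul_ne_top (by norm_num) hζHS) (hEA.trans hEzz)
  exact ne_top_of_le_ne_top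
    (ENNReal.mul_ne_top (by norm_num) (ENNReal.add_ne_top.mpr ⟨hA_ne, hζHS⟩)) hfin
end

section
/- Let ρ₁, …, ρ_r be density matrices on a finite-dimensional complex Hilbert space and p₁, …, p_r a probability distribution; set ρ := Σᵢ pᵢ ρᵢ and define the pretty good measurement M_i^{PG} := √(ρ⁺) pᵢ ρᵢ √(ρ⁺) + pᵢ Π_{ker(ρ)}. Then for every POVM (M₁, …, M_r), the success probability P_s(M) = Σᵢ pᵢ Tr[Mᵢ ρᵢ] satisfies P_s(M) ≤ √(P_s(M^{PG})). -/
open Matrix ComplexOrder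

variable {n : Type*} [Fintype n] [DecidableEq n]

/-- The square root `√(A⁺)` of the Moore–Penrose inverse of a Hermitian matrix `A`,
defined through the spectral decomposition `A = U D U*` as `U √(D⁺) U*`. -/
noncomputable def sqrtPinv {A : Matrix n n ℂ} (hA : A.IsHermitian) : Matrix n n ℂ :=
  (hA.eigenvectorUnitary : Matrix n n ℂ) *
    Matrix.diagonal (fun i => (Real.sqrt (hA.eigenvalues i)⁻¹ : ℂ)) *
    star (hA.eigenvectorUnitary : Matrix n n ℂ)

/-- The orthogonal projection `Π_{ker A}` onto the kernel of a Hermitian matrix `A`. -/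
noncomputable def kerProj {A : Matrix n n ℂ} (hA : A.IsHermitian) : Matrix n n ℂ :=
  (hA.eigenvectorUnitary : Matrix n n ℂ) *
    Matrix.diagonal (fun i => if hA.eigenvalues i = 0 then (1 : ℂ) else 0) *
    star (hA.eigenvectorUnitary : Matrix n n ℂ)

namespace Matrix.PosSemidef

open scoped MatrixOrder

noncomputable def sqrt {X : Matrix n n ℂ} (_ : X.PosSemidef) : Matrix n n ℂ := CFC.sqrt X

lemma sqrt_mul_self {X : Matrix n n ℂ} (hX : X.PosSemidef) : hX.sqrt * hX.sqrt = X :=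
  CFC.sqrt_mul_sqrt_self X hX.nonneg

lemma posSemidef_sqrt {X : Matrix n n ℂ} (hX : X.PosSemidef) : hX.sqrt.PosSemidef :=
  (CFC.sqrt_nonneg X).posSemidef

lemma exists_eq_conjTranspose_mul_self {X : Matrix n n ℂ} (hX : X.PosSemidef) :
    ∃ B : Matrix n n ℂ, X = Bᴴ * B :=
  ⟨hX.sqrt, by rw [hX.posSemidef_sqrt.isHermitian.eq, hX.sqrt_mul_self]⟩

end Matrix.PosSemidef

namespace BKhelp

noncomputable def hmap {A : Matrix n n ℂ} (hA : A.IsHermitian) (f : ℝ → ℂ) : Matrix n n ℂ :=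
  (hA.eigenvectorUnitary : Matrix n n ℂ) *
    Matrix.diagonal (fun i => f (hA.eigenvalues i)) *
    star (hA.eigenvectorUnitary : Matrix n n ℂ)

variable {A : Matrix n n ℂ} (hA : A.IsHermitian)

lemma hmap_mul (f g : ℝ → ℂ) :
    hmap hA f * hmap hA g = hmap hA (fun x => f x * g x) := by
  have h1 : star (hA.eigenvectorUnitary : Matrix n n ℂ) * (hA.eigenvectorUnitary : Matrix n n ℂ) = 1 :=
    Matrix.mem_unitaryGroup_iff'.mp hA.eigenvectorUnitary.2
  unfold hmap
  simp only [← Matrix.mul_assoc]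
  rw [Matrix.mul_assoc _ (star (hA.eigenvectorUnitary : Matrix n n ℂ)) _, h1, mul_one,
    Matrix.mul_assoc _ (Matrix.diagonal _) (Matrix.diagonal _), diagonal_mul_diagonal]

lemma hmap_congr {f g : ℝ → ℂ} (hfg : ∀ i, f (hA.eigenvalues i) = g (hA.eigenvalues i)) :
    hmap hA f = hmap hA g := by
  unfold hmap
  rw [show (fun i => f (hA.eigenvalues i)) = fun i => g (hA.eigenvalues i) from funext hfg]

lemma hmap_one : hmap hA (fun _ => (1 : ℂ)) = 1 := by
  have h1 : (hA.eigenvectorUnitary : Matrix n n ℂ) * star (hA.eigenvectorUnitary : Matrix n n ℂ) = 1 :=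
    Matrix.mem_unitaryGroup_iff.mp hA.eigenvectorUnitary.2
  unfold hmap
  simpa using h1

lemma hmap_sub (f g : ℝ → ℂ) :
    hmap hA (fun x => f x - g x) = hmap hA f - hmap hA g := by
  unfold hmap
  rw [show Matrix.diagonal (fun i => f (hA.eigenvalues i) - g (hA.eigenvalues i))
      = Matrix.diagonal (fun i => f (hA.eigenvalues i)) - Matrix.diagonal (fun i => g (hA.eigenvalues i)) by
    rw [diagonal_sub]]
  rw [mul_sub, sub_mul]

lemma hmap_id : hmap hA (fun x => (x : ℂ)) = A := by
  conv_rhs => rw [hA.spectral_theorem]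
  rfl

lemma hmap_isHermitian {f : ℝ → ℂ} (hf : ∀ x, (starRingEnd ℂ) (f x) = f x) :
    (hmap hA f).IsHermitian := by
  unfold Matrix.IsHermitian hmap
  rw [conjTranspose_mul, conjTranspose_mul, diagonal_conjTranspose]
  rw [← Matrix.star_eq_conjTranspose, ← Matrix.star_eq_conjTranspose, star_star, Matrix.mul_assoc]
  have hd : (star fun i => f (hA.eigenvalues i)) = fun i => f (hA.eigenvalues i) := by
    funext i
    simpa using hf (hA.eigenvalues i)
  rw [hd]

lemma hmap_posSemidef {f : ℝ → ℂ} (hf : ∀ i, 0 ≤ f (hA.eigenvalues i)) :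
    (hmap hA f).PosSemidef := by
  unfold hmap
  rw [Matrix.star_eq_conjTranspose]
  exact (Matrix.PosSemidef.diagonal hf).mul_mul_conjTranspose_same _

lemma trace_re_conjTranspose_mul_self (B : Matrix n n ℂ) :
    ((Bᴴ * B).trace).re = ∑ k, ∑ j, Complex.normSq (B j k) := by
  simp only [Matrix.trace, Matrix.diag, Matrix.mul_apply, Matrix.conjTranspose_apply]
  rw [Complex.re_sum]
  congr 1; funext k
  rw [Complex.re_sum]
  congr 1; funext j
  simp [Complex.mul_re, Complex.normSq_apply]

lemma psd_trace_re_nonneg {X : Matrix n n ℂ} (hX : X.PosSemidef) : 0 ≤ (X.trace).re := by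
  obtain ⟨B, rfl⟩ := hX.exists_eq_conjTranspose_mul_self
  rw [trace_re_conjTranspose_mul_self]
  exact Finset.sum_nonneg fun k _ => Finset.sum_nonneg fun j _ => Complex.normSq_nonneg _

lemma psd_trace_re_eq_zero {X : Matrix n n ℂ} (hX : X.PosSemidef) (htr : (X.trace).re = 0) :
    X = 0 := by
  obtain ⟨B, rfl⟩ := hX.exists_eq_conjTranspose_mul_self
  rw [trace_re_conjTranspose_mul_self] at htr
  have hB : B = 0 := by
    ext j k
    have h1 : ∀ k ∈ Finset.univ, (0:ℝ) ≤ ∑ j, Complex.normSq (B j k) := by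
      intro k _; exact Finset.sum_nonneg fun j _ => Complex.normSq_nonneg _
    have h2 := (Finset.sum_eq_zero_iff_of_nonneg h1).mp htr k (Finset.mem_univ k)
    have h3 : ∀ j ∈ Finset.univ, (0:ℝ) ≤ Complex.normSq (B j k) := by
      intro j _; exact Complex.normSq_nonneg _
    have h4 := (Finset.sum_eq_zero_iff_of_nonneg h3).mp h2 j (Finset.mem_univ j)
    simpa using Complex.normSq_eq_zero.mp h4
  rw [hB]; simp

lemma psd_mul_trace_re_nonneg {X Y : Matrix n n ℂ} (hX : X.PosSemidef) (hY : Y.PosSemidef) :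
    0 ≤ ((X * Y).trace).re := by
  have hs := hX.sqrt_mul_self
  have hpsd : (hX.sqrt * Y * hX.sqrt).PosSemidef := by
    have := hY.conjTranspose_mul_mul_same hX.sqrt
    rwa [hX.posSemidef_sqrt.isHermitian.eq] at this
  have heq : (hX.sqrt * Y * hX.sqrt).trace = (X * Y).trace := by
    rw [Matrix.trace_mul_cycle, hs]
  rw [← heq]
  exact psd_trace_re_nonneg hpsd

lemma psd_sum {ι : Type*} (s : Finset ι) (f : ι → Matrix n n ℂ)
    (hf : ∀ i ∈ s, (f i).PosSemidef) : (∑ i ∈ s, f i).PosSemidef := by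
  classical
  induction s using Finset.induction_on with
  | empty => simpa using Matrix.PosSemidef.zero
  | insert _ _ hni ih =>
    rw [Finset.sum_insert hni]
    exact (hf _ (Finset.mem_insert_self _ _)).add (ih fun i hi => hf i (Finset.mem_insert_of_mem hi))

end BKhelp

open BKhelp

section part2

open BKhelp

variable {A : Matrix n n ℂ} 

lemma psd_real_smul {X : Matrix n n ℂ} (hX : X.PosSemidef) {c : ℝ} (hc : 0 ≤ c) :
    ((c : ℂ) • X).PosSemidef := by
  constructor
  · show _ = _
    rw [conjTranspose_smul, hX.1.eq]
    congr 1
    simp [Complex.conj_ofReal]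
  · intro x
    exact (hX.smul (show (0:ℂ) ≤ (c:ℂ) by exact_mod_cast hc)).2 x

lemma hmap_zero (hA : A.IsHermitian) : hmap hA (fun _ => (0:ℂ)) = 0 := by
  unfold hmap
  simp

lemma sqrtPinv_eq (hA : A.IsHermitian) :
    sqrtPinv hA = hmap hA (fun x => ((Real.sqrt x⁻¹ : ℝ) : ℂ)) := rfl

lemma kerProj_eq (hA : A.IsHermitian) :
    kerProj hA = hmap hA (fun x => if x = 0 then (1:ℂ) else 0) := by
  unfold kerProj hmap
  congr 1

end part2

section part3
variable {A : Matrix n n ℂ} (hA : A.IsHermitian)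

noncomputable def fC : ℝ → ℂ := fun x => ((Real.sqrt (Real.sqrt x) : ℝ) : ℂ)
noncomputable def fT : ℝ → ℂ := fun x => ((Real.sqrt (Real.sqrt x⁻¹) : ℝ) : ℂ)
noncomputable def fD : ℝ → ℂ := fun x => ((Real.sqrt x : ℝ) : ℂ)

lemma C_herm : (hmap hA fC).IsHermitian :=
  hmap_isHermitian hA (fun x => Complex.conj_ofReal _)

lemma T_herm : (hmap hA fT).IsHermitian :=
  hmap_isHermitian hA (fun x => Complex.conj_ofReal _)

lemma D_herm : (hmap hA fD).IsHermitian :=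
  hmap_isHermitian hA (fun x => Complex.conj_ofReal _)

lemma Q_herm : (kerProj hA).IsHermitian := by
  rw [kerProj_eq]
  exact hmap_isHermitian hA (fun x => by split <;> simp)

lemma Q_psd : (kerProj hA).PosSemidef := by
  rw [kerProj_eq]
  exact hmap_posSemidef hA (fun i => by
    by_cases h0 : hA.eigenvalues i = 0 <;> simp [h0, zero_le_one])

lemma S_psd : (sqrtPinv hA).PosSemidef := by
  rw [sqrtPinv_eq]
  exact hmap_posSemidef hA (fun i => Complex.zero_le_real.mpr (Real.sqrt_nonneg _))

variable (hev : ∀ i, 0 ≤ hA.eigenvalues i)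

include hev

lemma CT_eq : hmap hA fC * hmap hA fT = 1 - kerProj hA := by
  rw [hmap_mul, kerProj_eq, ← hmap_one hA, ← hmap_sub]
  apply hmap_congr
  intro i
  have hx := hev i
  by_cases h0 : hA.eigenvalues i = 0
  · simp [fC, fT, h0]
  · show fC _ * fT _ = 1 - (if hA.eigenvalues i = 0 then (1:ℂ) else 0)
    rw [if_neg h0, sub_zero]
    unfold fC fT
    rw [← Complex.ofReal_mul,
      show Real.sqrt (Real.sqrt (hA.eigenvalues i)) * Real.sqrt (Real.sqrt (hA.eigenvalues i)⁻¹) = 1 by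
        rw [← Real.sqrt_mul (Real.sqrt_nonneg _), ← Real.sqrt_mul hx, mul_inv_cancel₀ h0,
          Real.sqrt_one, Real.sqrt_one],
      Complex.ofReal_one]

lemma TC_eq : hmap hA fT * hmap hA fC = 1 - kerProj hA := by
  rw [hmap_mul]
  rw [show (fun x => fT x * fC x) = fun x => fC x * fT x from funext fun x => mul_comm _ _]
  rw [← hmap_mul]
  exact CT_eq hA hev

lemma TT_eq : hmap hA fT * hmap hA fT = sqrtPinv hA := by
  rw [hmap_mul, sqrtPinv_eq]
  apply hmap_congr
  intro i
  simp only [fT, ← Complex.ofReal_mul]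
  norm_cast
  exact Real.mul_self_sqrt (Real.sqrt_nonneg _)

lemma CC_eq : hmap hA fC * hmap hA fC = hmap hA fD := by
  rw [hmap_mul]
  apply hmap_congr
  intro i
  simp only [fC, fD, ← Complex.ofReal_mul]
  norm_cast
  exact Real.mul_self_sqrt (Real.sqrt_nonneg _)

lemma DD_eq : hmap hA fD * hmap hA fD = A := by
  rw [hmap_mul]
  have h1 : hmap hA (fun x => fD x * fD x) = hmap hA (fun x : ℝ => (x : ℂ)) := by
    apply hmap_congr
    intro i
    simp only [fD, ← Complex.ofReal_mul]
    norm_cast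
    exact Real.mul_self_sqrt (hev i)
  rw [h1, hmap_id]

omit hev

lemma QAQ_eq : kerProj hA * A * kerProj hA = 0 := by
  have h2 : kerProj hA * A * kerProj hA =
      hmap hA (fun x => if x = 0 then (1:ℂ) else 0) * hmap hA (fun x : ℝ => (x : ℂ)) *
        hmap hA (fun x => if x = 0 then (1:ℂ) else 0) := by
    rw [kerProj_eq, hmap_id]
  rw [h2, hmap_mul, hmap_mul]
  refine (hmap_congr hA fun i => ?_).trans (hmap_zero hA)
  by_cases h0 : hA.eigenvalues i = 0 <;> simp [h0]

end part3

section part4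

lemma support_lemma {r : ℕ} (ρ : Fin r → Matrix n n ℂ) (hρpsd : ∀ i, (ρ i).PosSemidef)
    (p : Fin r → ℝ) (hp : ∀ i, 0 ≤ p i)
    (ρbar : Matrix n n ℂ) (hbar : ρbar = ∑ i, (p i : ℂ) • ρ i) (h : ρbar.IsHermitian)
    (i : Fin r) (hpi : 0 < p i) :
    (1 - kerProj h) * ρ i * (1 - kerProj h) = ρ i := by
  classical
  set Q := kerProj h with hQdef
  have hQherm : Q.IsHermitian := Q_herm h
  have hQρQ : Q * ρbar * Q = 0 := QAQ_eq h
  have hexp : Q * ρbar * Q = ∑ j, (p j : ℂ) • (Q * ρ j * Q) := by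
    rw [hbar, Finset.mul_sum, Finset.sum_mul]
    congr 1
    funext j
    rw [mul_smul_comm, smul_mul_assoc]
  have htr : ∑ j, p j * ((Q * ρ j * Q).trace).re = 0 := by
    have h0 := hexp ▸ hQρQ
    have := congrArg (fun X : Matrix n n ℂ => (Matrix.trace X).re) h0
    simpa [Matrix.trace_sum, Matrix.trace_smul, Complex.re_sum, smul_eq_mul,
      Complex.re_ofReal_mul] using this
  have hpsdQ : ∀ j, (Q * ρ j * Q).PosSemidef := by
    intro j
    have := (hρpsd j).conjTranspose_mul_mul_same Q
    rwa [hQherm.eq] at this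
  have hnn : ∀ j ∈ Finset.univ, 0 ≤ p j * ((Q * ρ j * Q).trace).re :=
    fun j _ => mul_nonneg (hp j) (psd_trace_re_nonneg (hpsdQ j))
  have hzero := (Finset.sum_eq_zero_iff_of_nonneg hnn).mp htr i (Finset.mem_univ i)
  have htr0 : ((Q * ρ i * Q).trace).re = 0 := by
    rcases mul_eq_zero.mp hzero with h' | h'
    · exact absurd h' (ne_of_gt hpi)
    · exact h'
  have hQρᵢQ : Q * ρ i * Q = 0 := psd_trace_re_eq_zero (hpsdQ i) htr0
  set s := (hρpsd i).sqrt with hsdef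
  have hsq : (s * Q)ᴴ * (s * Q) = Q * ρ i * Q := by
    rw [conjTranspose_mul, (hρpsd i).posSemidef_sqrt.isHermitian.eq, hQherm.eq,
      Matrix.mul_assoc, ← Matrix.mul_assoc s s Q, (hρpsd i).sqrt_mul_self, ← Matrix.mul_assoc]
  have hsQ : s * Q = 0 := conjTranspose_mul_self_eq_zero.mp (hsq.trans hQρᵢQ)
  have hρQ : ρ i * Q = 0 := by
    rw [← (hρpsd i).sqrt_mul_self, Matrix.mul_assoc, hsQ, mul_zero]
  have hQρ : Q * ρ i = 0 := by
    have := congrArg Matrix.conjTranspose hρQ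
    simpa [conjTranspose_mul, hQherm.eq, (hρpsd i).isHermitian.eq] using this
  have h1 : (1 - Q) * ρ i = ρ i := by rw [sub_mul, one_mul, hQρ, sub_zero]
  rw [h1, mul_sub, mul_one, hρQ, sub_zero]

end part4

section mainhelp
variable {X Y : Matrix n n ℂ}

lemma herm_sandwich (hX : X.IsHermitian) (hY : Y.IsHermitian) : (X * Y * X).IsHermitian := by
  show _ = _
  rw [conjTranspose_mul, conjTranspose_mul, hX.eq, hY.eq, ← Matrix.mul_assoc]

lemma herm_smul_real (hX : X.IsHermitian) (c : ℝ) : ((c : ℂ) • X).IsHermitian := by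
  show _ = _
  rw [conjTranspose_smul, hX.eq, Complex.star_def, Complex.conj_ofReal]

end mainhelp


set_option maxHeartbeats 1000000 in
/-- Barnum–Knill theorem: for every POVM `(M₁, …, M_r)`, the success probability
`P_s(M) = Σᵢ pᵢ Tr[Mᵢ ρᵢ]` does not exceed the square root of the success probability
of the pretty good measurement `M_i^{PG} = √(ρ⁺) pᵢ ρᵢ √(ρ⁺) + pᵢ Π_{ker ρ}`. -/
theorem stmt_11 {r : ℕ} (ρ : Fin r → Matrix n n ℂ)
    (hρpsd : ∀ i, (ρ i).PosSemidef) (hρtr : ∀ i, (ρ i).trace = 1)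
    (p : Fin r → ℝ) (hp : ∀ i, 0 ≤ p i) (hpsum : ∑ i, p i = 1)
    (ρbar : Matrix n n ℂ) (hbar : ρbar = ∑ i, (p i : ℂ) • ρ i)
    (h : ρbar.IsHermitian)
    (M : Fin r → Matrix n n ℂ) (hMpsd : ∀ i, (M i).PosSemidef) (hMsum : ∑ i, M i = 1) :
    ∑ i, p i * ((M i * ρ i).trace).re ≤
      Real.sqrt (∑ i, p i *
        (((sqrtPinv h * ((p i : ℂ) • ρ i) * sqrtPinv h + (p i : ℂ) • kerProj h)
          * ρ i).trace).re) := by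

  classical
  have hρbarpsd : ρbar.PosSemidef := by
    rw [hbar]; exact psd_sum _ _ (fun i _ => psd_real_smul (hρpsd i) (hp i))
  have hev : ∀ i, 0 ≤ h.eigenvalues i := fun i => hρbarpsd.eigenvalues_nonneg i
  set C := hmap h fC with hCdef
  set T := hmap h fT with hTdef
  set D := hmap h fD with hDdef
  set S := sqrtPinv h with hSdef
  set Q := kerProj h with hQdef
  have hCT : C * T = 1 - Q := CT_eq h hev
  have hTC : T * C = 1 - Q := TC_eq h hev
  have hTT : T * T = S := TT_eq h hev
  have hCC : C * C = D := CC_eq h hev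
  have hDD : D * D = ρbar := DD_eq h hev
  set A := fun i => C * M i * C with hAdef
  set B := fun i => (p i : ℂ) • (T * ρ i * T) with hBdef
  have hAherm : ∀ i, (A i).IsHermitian := fun i =>
    herm_sandwich (C_herm h) (hMpsd i).isHermitian
  have hBherm : ∀ i, (B i).IsHermitian := fun i =>
    herm_smul_real (herm_sandwich (T_herm h) (hρpsd i).isHermitian) (p i)
  -- Step 1 : equality of the success probability with the inner products
  have step1 : ∀ i, p i * ((M i * ρ i).trace).re = ((A i * B i).trace).re := by
    intro i
    by_cases hpi : p i = 0
    · simp [hAdef, hBdef, hpi]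
    · have hpos : 0 < p i := lt_of_le_of_ne (hp i) (Ne.symm hpi)
      have hsup : (1 - Q) * ρ i * (1 - Q) = ρ i :=
        support_lemma ρ hρpsd p hp ρbar hbar h i hpos
      have e1 : A i * B i = (p i : ℂ) • (C * M i * C * (T * ρ i * T)) := by
        rw [hAdef, hBdef, mul_smul_comm]
      have e2 : (C * M i * C * (T * ρ i * T)).trace = (M i * ρ i).trace := by
        have a1 : C * M i * C * (T * ρ i * T) = (C * M i) * ((C * T) * (ρ i * T)) := by
          simp only [Matrix.mul_assoc]
        rw [a1, hCT, Matrix.trace_mul_comm]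
        have a2 : ((1 - Q) * (ρ i * T)) * (C * M i) = ((1 - Q) * ρ i * (T * C)) * M i := by
          simp only [Matrix.mul_assoc]
        rw [a2, hTC, hsup, Matrix.trace_mul_comm]
      rw [e1, Matrix.trace_smul, e2, smul_eq_mul, Complex.re_ofReal_mul]
  -- Cauchy-Schwarz
  have h4 : ∀ (X : Fin r → Matrix n n ℂ), (∀ i, (X i).IsHermitian) →
      ∑ i, ∑ j, ∑ k, ‖(X i) j k‖ ^ 2 = ∑ i, ((X i * X i).trace).re := by
    intro X hX
    refine Finset.sum_congr rfl fun i _ => ?_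
    have e : ((X i * X i).trace) = (((X i)ᴴ * X i).trace) := by rw [(hX i).eq]
    rw [e, trace_re_conjTranspose_mul_self, Finset.sum_comm]
    simp [Complex.sq_norm]
  have h1 : ∀ i, ((A i * B i).trace).re ≤
      ∑ j, ∑ k, ‖(A i) j k‖ * ‖(B i) j k‖ := by
    intro i
    have e : (A i * B i).trace = ∑ j, ∑ k, (A i) j k * (B i) k j := by
      simp [Matrix.trace, Matrix.mul_apply, Matrix.diag]
    rw [e, Complex.re_sum]
    refine Finset.sum_le_sum fun j _ => ?_
    rw [Complex.re_sum]
    refine Finset.sum_le_sum fun k _ => ?_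
    rw [show (B i) k j = star ((B i) j k) from ((hBherm i).apply k j).symm]
    calc ((A i) j k * star ((B i) j k)).re
        ≤ ‖(A i) j k * star ((B i) j k)‖ := Complex.re_le_norm _
      _ = ‖(A i) j k‖ * ‖(B i) j k‖ := by
          rw [norm_mul, Complex.star_def, Complex.norm_conj]
  have h3 : ∑ i, ∑ j, ∑ k, ‖(A i) j k‖ * ‖(B i) j k‖ ≤
      Real.sqrt (∑ i, ∑ j, ∑ k, ‖(A i) j k‖ ^ 2) *
        Real.sqrt (∑ i, ∑ j, ∑ k, ‖(B i) j k‖ ^ 2) := by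
    have := Real.sum_mul_le_sqrt_mul_sqrt (Finset.univ : Finset (Fin r × n × n))
      (fun x => ‖(A x.1) x.2.1 x.2.2‖) (fun x => ‖(B x.1) x.2.1 x.2.2‖)
    simpa [Fintype.sum_prod_type] using this
  have hCS : ∑ i, ((A i * B i).trace).re ≤
      Real.sqrt (∑ i, ((A i * A i).trace).re) * Real.sqrt (∑ i, ((B i * B i).trace).re) := by
    refine (Finset.sum_le_sum fun i _ => h1 i).trans ?_
    calc ∑ i, ∑ j, ∑ k, ‖(A i) j k‖ * ‖(B i) j k‖
        ≤ Real.sqrt (∑ i, ∑ j, ∑ k, ‖(A i) j k‖ ^ 2) *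
          Real.sqrt (∑ i, ∑ j, ∑ k, ‖(B i) j k‖ ^ 2) := h3
      _ = _ := by rw [h4 A hAherm, h4 B hBherm]
  -- X bound
  have hXper : ∀ i, ((A i * A i).trace).re ≤ ((M i * ρbar).trace).re := by
    intro i
    have e1 : A i * A i = (C * M i) * (D * (M i * C)) := by
      rw [hAdef, ← hCC]; simp only [Matrix.mul_assoc]
    have e2 : ((C * M i) * (D * (M i * C))).trace = ((D * M i * D) * M i).trace := by
      rw [Matrix.trace_mul_comm]
      refine congrArg Matrix.trace ?_
      have a : (D * (M i * C)) * (C * M i) = D * M i * (C * C) * M i := by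
        simp only [Matrix.mul_assoc]
      rw [a, hCC]
    have e3 : (M i * ρbar).trace = (D * M i * D).trace := by
      rw [← hDD, show M i * (D * D) = M i * D * D from by rw [Matrix.mul_assoc],
        Matrix.trace_mul_cycle]
    have hpsd1 : (D * M i * D).PosSemidef := by
      have := (hMpsd i).conjTranspose_mul_mul_same D
      rwa [(D_herm h).eq] at this
    have h1M : (1 - M i).PosSemidef := by
      have e : ∑ j ∈ Finset.univ.erase i, M j = 1 - M i := by
        rw [eq_sub_iff_add_eq, Finset.sum_erase_add _ _ (Finset.mem_univ i), hMsum]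
      rw [← e]
      exact psd_sum _ _ fun j _ => hMpsd j
    have hge := psd_mul_trace_re_nonneg hpsd1 h1M
    have e4 : ((D * M i * D) * (1 - M i)).trace = (D * M i * D).trace - ((D * M i * D) * M i).trace := by
      rw [mul_sub, mul_one, Matrix.trace_sub]
    rw [e4] at hge
    rw [e1, e2, e3]
    have := Complex.sub_re ((D * M i * D).trace) (((D * M i * D) * M i).trace)
    rw [this] at hge
    linarith
  have hsum1 : ∑ i, ((M i * ρbar).trace).re = 1 := by
    have e : ∑ i, (M i * ρbar).trace = ((∑ i, M i) * ρbar).trace := by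
      rw [Finset.sum_mul, Matrix.trace_sum]
    have etr : ρbar.trace = 1 := by
      rw [hbar, Matrix.trace_sum]
      simp only [Matrix.trace_smul, smul_eq_mul, hρtr, mul_one]
      norm_cast
    rw [← Complex.re_sum, e, hMsum, one_mul, etr, Complex.one_re]
  have hX : ∑ i, ((A i * A i).trace).re ≤ 1 :=
    (Finset.sum_le_sum fun i _ => hXper i).trans (le_of_eq hsum1)
  -- Y bound
  have hY : ∑ i, ((B i * B i).trace).re ≤
      ∑ i, p i * (((S * ((p i : ℂ) • ρ i) * S + (p i : ℂ) • Q) * ρ i).trace).re := by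
    refine Finset.sum_le_sum fun i _ => ?_
    have eB : B i * B i = ((p i : ℂ) * (p i : ℂ)) • ((T * ρ i * T) * (T * ρ i * T)) := by
      rw [hBdef, smul_mul_assoc, mul_smul_comm, smul_smul]
    have eBtr : ((T * ρ i * T) * (T * ρ i * T)).trace = ((S * ρ i * S) * ρ i).trace := by
      have a1 : (T * ρ i * T) * (T * ρ i * T) = (T * ρ i) * ((T * T) * (ρ i * T)) := by
        simp only [Matrix.mul_assoc]
      rw [a1, hTT, Matrix.trace_mul_comm]
      refine congrArg Matrix.trace ?_
      have a2 : (S * (ρ i * T)) * (T * ρ i) = S * ρ i * (T * T) * ρ i := by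
        simp only [Matrix.mul_assoc]
      rw [a2, hTT]
    have eRHS : (S * ((p i : ℂ) • ρ i) * S + (p i : ℂ) • Q) * ρ i
        = (p i : ℂ) • ((S * ρ i * S) * ρ i) + (p i : ℂ) • (Q * ρ i) := by
      rw [add_mul, mul_smul_comm, smul_mul_assoc, smul_mul_assoc, smul_mul_assoc]
    have hQnn : 0 ≤ ((Q * ρ i).trace).re := psd_mul_trace_re_nonneg (Q_psd h) (hρpsd i)
    rw [eB, eRHS, Matrix.trace_smul, Matrix.trace_add, Matrix.trace_smul, Matrix.trace_smul, eBtr]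
    simp only [smul_eq_mul, Complex.add_re, ← Complex.ofReal_mul, Complex.re_ofReal_mul]
    nlinarith [mul_nonneg (mul_nonneg (hp i) (hp i)) hQnn]
  -- final assembly
  calc ∑ i, p i * ((M i * ρ i).trace).re
      = ∑ i, ((A i * B i).trace).re := Finset.sum_congr rfl fun i _ => step1 i
    _ ≤ Real.sqrt (∑ i, ((A i * A i).trace).re) *
          Real.sqrt (∑ i, ((B i * B i).trace).re) := hCS
    _ ≤ 1 * Real.sqrt (∑ i, ((B i * B i).trace).re) := by
        exact mul_le_mul_of_nonneg_right (Real.sqrt_le_one.mpr hX) (Real.sqrt_nonneg _)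
    _ = Real.sqrt (∑ i, ((B i * B i).trace).re) := one_mul _
    _ ≤ _ := Real.sqrt_le_sqrt hY
end

section
/- Let H be a finite-dimensional complex Hilbert space, let A be a self-adjoint matrix and B a positive semi-definite matrix on H with −B ≤ A ≤ B. Then Tr[A²] ≤ Tr[B²]. -/
open ComplexOrder

lemma psd_trace_re_nonneg {n : Type*} [Fintype n] [DecidableEq n]
    {M : Matrix n n ℂ} (hM : M.PosSemidef) : 0 ≤ M.trace.re := by
  have h : ∀ i, 0 ≤ M i i := fun i => hM.diag_nonneg
  have : (0:ℝ) ≤ ∑ i, (M i i).re :=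
    Finset.sum_nonneg fun i _ => (Complex.le_def.mp (h i)).1
  simpa [Matrix.trace, Matrix.diag, Complex.re_sum] using this

open scoped MatrixOrder in
lemma trace_mul_psd_nonneg {n : Type*} [Fintype n] [DecidableEq n]
    {P Q : Matrix n n ℂ} (hP : P.PosSemidef) (hQ : Q.PosSemidef) :
    0 ≤ ((P * Q).trace).re := by
  have hS : (CFC.sqrt Q).PosSemidef := Matrix.nonneg_iff_posSemidef.mp (CFC.sqrt_nonneg Q)
  have key : (P * Q).trace = (CFC.sqrt Q * P * (CFC.sqrt Q).conjTranspose).trace := by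
    rw [hS.isHermitian.eq, Matrix.trace_mul_cycle, CFC.sqrt_mul_sqrt_self Q hQ.nonneg,
      Matrix.trace_mul_comm]
  rw [key]
  exact psd_trace_re_nonneg (hP.mul_mul_conjTranspose_same (CFC.sqrt Q))

/-- If `A` is self-adjoint, `B` is positive semi-definite and `-B ≤ A ≤ B`,
then `Tr[A²] ≤ Tr[B²]`. -/
theorem stmt_16 {n : Type*} [Fintype n] [DecidableEq n]
    (A B : Matrix n n ℂ) (hA : A.IsHermitian) (hB : B.PosSemidef)
    (h₁ : (A + B).PosSemidef) (h₂ : (B - A).PosSemidef) :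
    ((A * A).trace).re ≤ ((B * B).trace).re := by
  have h := trace_mul_psd_nonneg h₁ h₂
  have key : ((A + B) * (B - A)).trace = (B * B).trace - (A * A).trace := by
    have e : (A + B) * (B - A) = A * B - A * A + (B * B - B * A) := by noncomm_ring
    rw [e]
    simp [Matrix.trace_sub, Matrix.trace_add, Matrix.trace_mul_comm A B]
  rw [key] at h
  simp [Complex.sub_re] at h
  linarith
end
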